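/- For every t ∈ ℂ with t ≠ 0, the bracket on ℂ⁵ defined by [e₃,e₄] = e₂ + t·e₅, [e₄,e₃] = −e₂ − t·e₅, [e₃,e₅] = e₁, [e₅,e₃] = −e₁, [e₄,e₅] = e₃, [e₅,e₄] = −e₃ (the deformation of the nilpotent Lie algebra W₃ along the 2-cocycle φ₂(e₃,e₄) = e₅, φ₂(e₄,e₃) = −e₅) is isomorphic to the Lie algebra 𝔡 ⊕ ℂ on ℂ⁵ with bracket [e₁,e₂] = e₃, [e₂,e₁] = −e₃, [e₁,e₃] = −e₂, [e₃,e₁] = e₂, [e₂,e₃] = e₄, [e₃,e₂] = −e₄, and all brackets involving e₅ equal to zero. -/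
import Mathlib


/-- The deformation of the nilpotent Lie algebra `W₃` on `ℂ⁵` along the
2-cocycle `φ₂(e₃,e₄) = e₅`, `φ₂(e₄,e₃) = -e₅`: the brackets
`[e₃,e₄] = e₂ + t·e₅`, `[e₄,e₃] = -e₂ - t·e₅`, `[e₃,e₅] = e₁`,
`[e₅,e₃] = -e₁`, `[e₄,e₅] = e₃`, `[e₅,e₄] = -e₃`, in coordinates. -/
def W3Deformed2 (t : ℂ) (x y : Fin 5 → ℂ) : Fin 5 → ℂ :=
  ![x 2 * y 4 - x 4 * y 2,
    x 2 * y 3 - x 3 * y 2,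
    x 3 * y 4 - x 4 * y 3,
    0,
    t * (x 2 * y 3 - x 3 * y 2)]

/-- The bracket of the Lie algebra `𝔡 ⊕ ℂ` on `ℂ⁵`: `[e₁,e₂] = e₃`,
`[e₂,e₁] = -e₃`, `[e₁,e₃] = -e₂`, `[e₃,e₁] = e₂`, `[e₂,e₃] = e₄`,
`[e₃,e₂] = -e₄`, all brackets involving `e₅` zero, in coordinates. -/
def diamondPlusC (x y : Fin 5 → ℂ) : Fin 5 → ℂ :=
  ![0,
    x 2 * y 0 - x 0 * y 2,
    x 0 * y 1 - x 1 * y 0,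
    x 1 * y 2 - x 2 * y 1,
    0]

/-- For every `t ≠ 0`, the deformation of `W₃` along the 2-cocycle
`φ₂(e₃,e₄) = e₅`, `φ₂(e₄,e₃) = -e₅` is isomorphic to `𝔡 ⊕ ℂ`. -/
theorem W3_deformation2_iso_diamondPlusC :
    ∀ t : ℂ, t ≠ 0 →
      ∃ T : (Fin 5 → ℂ) ≃ₗ[ℂ] (Fin 5 → ℂ),
        ∀ x y : Fin 5 → ℂ, T (W3Deformed2 t x y) = diamondPlusC (T x) (T y) := by
  intro t ht
  obtain ⟨a, ha⟩ := IsAlgClosed.exists_pow_nat_eq t (n := 2) (by norm_num)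
  have ha2 : a * a = t := by rw [← ha]; ring
  have ha0 : a ≠ 0 := by
    rintro rfl
    apply ht
    rw [← ha2]; ring
  refine ⟨{
      toFun := fun x => ![a * x 3, x 4, a * x 2, -(a * x 0), x 1 - x 4 / t],
      invFun := fun y => ![-(y 3) / a, y 4 + y 1 / t, y 2 / a, y 0 / a, y 1],
      map_add' := by
        intro x y
        funext i
        fin_cases i <;> simp <;> ring
      map_smul' := by
        intro c x
        funext i
        fin_cases i <;> simp <;> ring
      left_inv := by
        intro x
        funext i
        fin_cases i <;> simp <;> field_simp <;> ring
      right_inv := by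
        intro y
        funext i
        fin_cases i <;> simp <;> field_simp <;> ring }, ?_⟩
  intro x y
  funext i
  simp only [LinearEquiv.coe_mk, LinearMap.coe_mk, AddHom.coe_mk,
    W3Deformed2, diamondPlusC]
  subst ha2
  fin_cases i <;> (try simp) <;> (try field_simp) <;> (try ring)
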